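/- Let V = (V_k, E_k) be a regular vine on d elements and e, e' two distinct edges (possibly in different trees). Then the conditioned-set pairs satisfy {a_e, b_e} ≠ {a_{e'}, b_{e'}}; i.e., no unordered pair of variables is the conditioned set of two different edges of the vine. -/

import Mathlib

open Finset

variable {α : Type*} [DecidableEq α] [Fintype α]

/-- The simple graph on `α` induced by a finite set of unordered pairs. -/
def graphOf (E : Finset (Sym2 α)) : SimpleGraph α where
  Adj x y := x ≠ y ∧ s(x, y) ∈ E
  symm := by
    constructor
    intro x y h
    refine ⟨h.1.symm, ?_⟩
    rw [Sym2.eq_swap]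
    exact h.2
  loopless := ⟨fun x h => h.1 rfl⟩

/-- `(V, E)` is a finite tree: edges join distinct vertices of `V`, the induced
graph is acyclic, and all vertices of `V` are mutually reachable. -/
def IsTreeOn (V : Finset α) (E : Finset (Sym2 α)) : Prop :=
  (∀ e ∈ E, ∀ x ∈ e, x ∈ V) ∧ (∀ e ∈ E, ¬ e.IsDiag) ∧
    (graphOf E).IsAcyclic ∧ ∀ x ∈ V, ∀ y ∈ V, (graphOf E).Reachable x y

/-- Complete union of an edge: the union of the complete unions of its endpoints
(each vertex of a tree of the vine is identified with its complete union). -/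
def eUnion (e : Sym2 (Finset α)) : Finset α :=
  Sym2.lift ⟨fun A B => A ∪ B, fun A B => union_comm A B⟩ e

/-- Conditioning set `D_e` of an edge. -/
def condSet (e : Sym2 (Finset α)) : Finset α :=
  Sym2.lift ⟨fun A B => A ∩ B, fun A B => inter_comm A B⟩ e

/-- Conditioned set `{a_e, b_e}` of an edge. -/
def condPair (e : Sym2 (Finset α)) : Finset α :=
  Sym2.lift ⟨fun A B => symmDiff A B, fun A B => symmDiff_comm A B⟩ e

/-- A regular vine on a finite set `α` of `d = Fintype.card α` elements.  The
vertices of tree `k` (for `k = 1, …, d-1`) are identified with their complete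
unions, subsets of `α`; `V (k+1) = E k` is expressed via complete unions. -/
structure RegularVine (α : Type*) [DecidableEq α] [Fintype α] where
  V : ℕ → Finset (Finset α)
  E : ℕ → Finset (Sym2 (Finset α))
  hV1 : V 1 = Finset.univ.image (fun a : α => ({a} : Finset α))
  hVsucc : ∀ k, 1 ≤ k → V (k + 1) = (E k).image eUnion
  tree : ∀ k, 1 ≤ k → k + 1 ≤ Fintype.card α → IsTreeOn (V k) (E k)
  hEzero : ∀ k, k = 0 ∨ Fintype.card α ≤ k → E k = ∅
  proximity : ∀ k, 1 ≤ k → ∀ p ∈ E (k + 1),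
    ∃ a ∈ E k, ∃ b ∈ E k, p = s(eUnion a, eUnion b) ∧ ∃ v, v ∈ a ∧ v ∈ b

/-- A tree `(V, E)` is a path: it is a tree and every vertex has degree at most 2. -/
def IsPathOn (V : Finset α) (E : Finset (Sym2 α)) : Prop :=
  IsTreeOn V E ∧ ∀ v ∈ V, (E.filter (fun e => v ∈ e)).card ≤ 2

/-- A permutation `(i_1, …, i_d) = (σ 0, …, σ (d-1))` is compatible with a vine on
`Fin d`: for every `k` there is an edge of tree `k` with conditioned set
`{σ k, σ r}` (some `r < k`) and conditioning set `{σ 0, …, σ (k-1)} \ {σ r}`. -/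
def Compatible {d : ℕ} (𝒱 : RegularVine (Fin d)) (σ : Fin d → Fin d) : Prop :=
  ∀ k : Fin d, 1 ≤ (k : ℕ) → ∃ r : Fin d, r < k ∧ ∃ e ∈ 𝒱.E (k : ℕ),
    condPair e = {σ k, σ r} ∧
    condSet e = ((Finset.univ.filter (fun s : Fin d => s < k)).image σ).erase (σ r)


/-!
Every edge of tree `k` joins two `k`-element sets meeting in `k - 1` elements (the lower bound
on the intersection is the proximity condition), so its conditioned set has exactly two
elements, and tree `k` has at most `d - k` edges. Altogether there are at most `d (d - 1) / 2`
edges, the number of pairs, so injectivity follows from surjectivity. For surjectivity, any two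
elements lie in the top vertex `univ`; going down the trees, follow a vertex containing both
until the two endpoints of the edge it comes from separate them: that edge has conditioned set
exactly the pair.
-/

section FinsetCard

variable {β : Type*} [DecidableEq β] {A B : Finset β}

lemma card_inter_lt_of_ne (hAB : A ≠ B) (hcard : #A = #B) : #(A ∩ B) < #A := by
  refine (card_le_card inter_subset_left).lt_of_ne fun h => hAB ?_
  have hAB := inter_eq_left.mp (eq_of_subset_of_card_le inter_subset_left h.ge)
  exact eq_of_subset_of_card_le hAB hcard.ge

lemma card_sdiff_union_sdiff_eq_two {k : ℕ} (hA : #A = k) (hB : #B = k)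
    (hU : #(A ∪ B) = k + 1) : #(A \ B ∪ B \ A) = 2 := by
  rw [card_union_of_disjoint disjoint_sdiff_sdiff]
  have := card_union_add_card_inter A B
  have := card_sdiff_add_card_inter A B
  have := card_sdiff_add_card_inter B A
  rw [inter_comm B A] at this
  omega

lemma sdiff_union_sdiff_eq_pair (h : #(A \ B ∪ B \ A) = 2) {x y : β} (hxA : x ∈ A)
    (hxB : x ∉ B) (hyB : y ∈ B) (hyA : y ∉ A) : A \ B ∪ B \ A = {x, y} := by
  refine (eq_of_subset_of_card_le ?_ ?_).symm
  · intro z hz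
    rw [mem_insert, mem_singleton] at hz
    rcases hz with rfl | rfl <;> simp [*]
  · rw [h, card_pair (ne_of_mem_of_not_mem hxA hyA)]

end FinsetCard

lemma sum_Icc_sub_eq_choose_two (d : ℕ) : ∑ k ∈ Icc 1 (d - 1), (d - k) = d.choose 2 := by
  rcases d with _ | n
  · rfl
  calc ∑ k ∈ Icc 1 (n + 1 - 1), (n + 1 - k) = ∑ k ∈ Icc 1 n, k.choose 1 := by
        refine sum_nbij' (fun k => n + 1 - k) (fun k => n + 1 - k) ?_ ?_ ?_ ?_ ?_ <;> intro k hk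
        all_goals simp only [mem_Icc, Nat.choose_one_right] at hk ⊢
        all_goals omega
    _ = (n + 1).choose 2 := Nat.sum_Icc_choose n 1

section TreeOn

variable {β : Type*} {V : Finset β} {E : Finset (Sym2 β)}

lemma mem_of_mem_edgeSet_graphOf {e : Sym2 β} (he : e ∈ (graphOf E).edgeSet) : e ∈ E := by
  induction e using Sym2.ind with
  | _ x y => exact he.2

namespace IsTreeOn

lemma exists_mem_edge (h : IsTreeOn V E) {x y : β} (hx : x ∈ V) (hy : y ∈ V) (hxy : x ≠ y) :
    ∃ e ∈ E, x ∈ e := by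
  obtain ⟨w⟩ := h.2.2.2 x hx y hy
  cases w with
  | nil => exact absurd rfl hxy
  | cons hadj _ => exact ⟨_, hadj.2, Sym2.mem_mk_left _ _⟩

lemma support_subset {x y : β} (h : IsTreeOn V E) (hy : y ∈ V) (w : (graphOf E).Walk x y) :
    ∀ z ∈ w.support, z ∈ V := by
  intro z hz
  obtain rfl | ⟨e, he, hze⟩ := SimpleGraph.Walk.mem_support_iff_exists_mem_edges.mp hz
  · exact hy
  · exact h.1 e (mem_of_mem_edgeSet_graphOf (w.edges_subset_edgeSet he)) z hze

lemma isTree_induce (h : IsTreeOn V E) (hV : V.Nonempty) :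
    ((graphOf E).induce (V : Set β)).IsTree := by
  refine ⟨(SimpleGraph.connected_iff _).mpr ⟨fun ⟨x, hx⟩ ⟨y, hy⟩ => ?_, ⟨⟨_, hV.choose_spec⟩⟩⟩,
    h.2.2.1.induce _⟩
  obtain ⟨w⟩ := h.2.2.2 x hx y hy
  exact ⟨w.induce _ (h.support_subset hy w)⟩

lemma card_add_one (h : IsTreeOn V E) (hV : V.Nonempty) : #E + 1 = #V := by
  classical
  have hcard := (h.isTree_induce hV).card_edgeFinset
  simp only [coe_sort_coe, Fintype.card_coe] at hcard
  rw [← hcard]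
  congr 1
  refine (card_bij (fun e _ => Sym2.map Subtype.val e) ?_
    (fun _ _ _ _ hee => Sym2.map.injective Subtype.val_injective hee) ?_).symm
  · intro e he
    induction e using Sym2.ind with
    | _ x y => exact (SimpleGraph.mem_edgeFinset.mp he).2
  · intro e he
    induction e using Sym2.ind with
    | _ x y =>
      have hx := h.1 _ he x (Sym2.mem_mk_left x y)
      have hy := h.1 _ he y (Sym2.mem_mk_right x y)
      have hxy : x ≠ y := fun hxy => h.2.1 _ he (Sym2.mk_isDiag_iff.mpr hxy)
      exact ⟨s(⟨x, hx⟩, ⟨y, hy⟩), SimpleGraph.mem_edgeFinset.mpr ⟨hxy, he⟩, rfl⟩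

end IsTreeOn

end TreeOn

lemma condPair_mk (A B : Finset α) : condPair s(A, B) = A \ B ∪ B \ A := by
  show symmDiff A B = _
  rw [symmDiff_def, sup_eq_union]

lemma subset_eUnion_of_mem {β : Type*} [DecidableEq β] {A : Finset β} {e : Sym2 (Finset β)}
    (h : A ∈ e) : A ⊆ eUnion e := by
  induction e using Sym2.ind with
  | _ P Q =>
    rcases Sym2.mem_iff.mp h with rfl | rfl
    · exact subset_union_left
    · exact subset_union_right

namespace RegularVine

variable {d k : ℕ} (𝒱 : RegularVine (Fin d))

lemma isTreeOn (hk : 1 ≤ k) (hkd : k + 1 ≤ d) : IsTreeOn (𝒱.V k) (𝒱.E k) :=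
  𝒱.tree k hk (by rwa [Fintype.card_fin])

lemma mem_V_succ (hk : 1 ≤ k) {e : Sym2 (Finset (Fin d))} (he : e ∈ 𝒱.E k) :
    eUnion e ∈ 𝒱.V (k + 1) := by
  rw [𝒱.hVsucc k hk]
  exact mem_image_of_mem _ he

lemma exists_eq_eUnion_of_mem_V_succ (hk : 1 ≤ k) {A : Finset (Fin d)} (hA : A ∈ 𝒱.V (k + 1)) :
    ∃ P Q, s(P, Q) ∈ 𝒱.E k ∧ A = P ∪ Q := by
  rw [𝒱.hVsucc k hk, mem_image] at hA
  obtain ⟨e, he, rfl⟩ := hA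
  induction e using Sym2.ind with
  | _ P Q => exact ⟨P, Q, he, rfl⟩

lemma card_inter_lt (hk : 1 ≤ k) (hkd : k + 1 ≤ d) (hV : ∀ A ∈ 𝒱.V k, #A = k)
    {P Q : Finset (Fin d)} (h : s(P, Q) ∈ 𝒱.E k) : #(P ∩ Q) < k := by
  have htree := 𝒱.isTreeOn hk hkd
  have hP := hV P (htree.1 _ h P (Sym2.mem_mk_left P Q))
  have hQ := hV Q (htree.1 _ h Q (Sym2.mem_mk_right P Q))
  have hPQ : P ≠ Q := fun hPQ => htree.2.1 _ h (Sym2.mk_isDiag_iff.mpr hPQ)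
  exact hP ▸ card_inter_lt_of_ne hPQ (hP.trans hQ.symm)

lemma le_card_inter (hk : 1 ≤ k) (hkd : k + 1 ≤ d) (hV : ∀ A ∈ 𝒱.V k, #A = k)
    {P Q : Finset (Fin d)} (h : s(P, Q) ∈ 𝒱.E (k + 1)) : k ≤ #(P ∩ Q) := by
  obtain ⟨a, ha, b, -, hab, v, hva, hvb⟩ := 𝒱.proximity k hk _ h
  have hv : v ⊆ P ∩ Q := by
    rcases Sym2.eq_iff.mp hab with ⟨rfl, rfl⟩ | ⟨rfl, rfl⟩
    · exact subset_inter (subset_eUnion_of_mem hva) (subset_eUnion_of_mem hvb)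
    · exact subset_inter (subset_eUnion_of_mem hvb) (subset_eUnion_of_mem hva)
  exact hV v ((𝒱.isTreeOn hk hkd).1 a ha v hva) ▸ card_le_card hv

lemma card_of_mem_V (hk : 1 ≤ k) (hkd : k ≤ d) {A : Finset (Fin d)} (hA : A ∈ 𝒱.V k) :
    #A = k := by
  induction k using Nat.strong_induction_on generalizing A with
  | _ k ih =>
    rcases k with _ | _ | m
    · omega
    · rw [𝒱.hV1, mem_image] at hA
      obtain ⟨a, -, rfl⟩ := hA
      exact card_singleton a
    obtain ⟨P, Q, hPQ, rfl⟩ := 𝒱.exists_eq_eUnion_of_mem_V_succ (by omega) hA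
    have hV : ∀ B ∈ 𝒱.V (m + 1), #B = m + 1 :=
      fun B hB => ih (m + 1) (by omega) (by omega) (by omega) hB
    have htree := 𝒱.isTreeOn (k := m + 1) (by omega) hkd
    have hP := hV P (htree.1 _ hPQ P (Sym2.mem_mk_left P Q))
    have hQ := hV Q (htree.1 _ hPQ Q (Sym2.mem_mk_right P Q))
    have hlt := 𝒱.card_inter_lt (by omega) hkd hV hPQ
    have hle : m ≤ #(P ∩ Q) := by
      rcases m with _ | m
      · exact Nat.zero_le _
      · exact 𝒱.le_card_inter (by omega) (by omega)
          (fun B hB => ih (m + 1) (by omega) (by omega) (by omega) hB) hPQ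
    have := card_union_add_card_inter P Q
    omega

lemma card_condPair (hk : 1 ≤ k) (hkd : k + 1 ≤ d) {e : Sym2 (Finset (Fin d))} (he : e ∈ 𝒱.E k) :
    #(condPair e) = 2 := by
  induction e using Sym2.ind with
  | _ P Q =>
    have htree := 𝒱.isTreeOn hk hkd
    rw [condPair_mk]
    exact card_sdiff_union_sdiff_eq_two
      (𝒱.card_of_mem_V hk (by omega) (htree.1 _ he P (Sym2.mem_mk_left P Q)))
      (𝒱.card_of_mem_V hk (by omega) (htree.1 _ he Q (Sym2.mem_mk_right P Q)))
      (𝒱.card_of_mem_V (by omega) hkd (𝒱.mem_V_succ hk he))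

lemma exists_mem_V_of_mem (hk : 1 ≤ k) (hkd : k ≤ d) (x : Fin d) : ∃ A ∈ 𝒱.V k, x ∈ A := by
  induction k, hk using Nat.le_induction generalizing x with
  | base => exact ⟨{x}, 𝒱.hV1 ▸ mem_image_of_mem _ (mem_univ x), mem_singleton_self x⟩
  | succ k hk ih =>
    obtain ⟨A, hA, hxA⟩ := ih (by omega) x
    have hAc : #Aᶜ ≠ 0 := by
      rw [card_compl, Fintype.card_fin, 𝒱.card_of_mem_V hk (by omega) hA]
      omega
    obtain ⟨y, hy⟩ := card_ne_zero.mp hAc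
    obtain ⟨B, hB, hyB⟩ := ih (by omega) y
    have hAB : A ≠ B := fun h => mem_compl.mp hy (h ▸ hyB)
    obtain ⟨e, he, hAe⟩ := (𝒱.isTreeOn hk hkd).exists_mem_edge hA hB hAB
    exact ⟨eUnion e, 𝒱.mem_V_succ hk he, subset_eUnion_of_mem hAe hxA⟩

lemma card_E_add_le (hk : 1 ≤ k) (hkd : k + 1 ≤ d) : #(𝒱.E k) + k ≤ d := by
  have htree {j : ℕ} (hj : 1 ≤ j) (hjd : j + 1 ≤ d) : #(𝒱.E j) + 1 = #(𝒱.V j) :=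
    (𝒱.isTreeOn hj hjd).card_add_one
      ((𝒱.exists_mem_V_of_mem hj (by omega) ⟨0, by omega⟩).imp fun _ hA => hA.1)
  induction k, hk using Nat.le_induction with
  | base =>
    have htree := htree le_rfl hkd
    rw [𝒱.hV1, card_image_of_injective _ singleton_injective, card_univ, Fintype.card_fin] at htree
    omega
  | succ k hk ih =>
    have himage : #(𝒱.V (k + 1)) ≤ #(𝒱.E k) := 𝒱.hVsucc k hk ▸ card_image_le
    have := htree (by omega) hkd
    have := ih (by omega)
    omega

lemma sum_card_E_le : ∑ k ∈ Icc 1 (d - 1), #(𝒱.E k) ≤ d.choose 2 := by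
  rw [← sum_Icc_sub_eq_choose_two]
  refine sum_le_sum fun k hk => ?_
  obtain ⟨hk, hkd⟩ := mem_Icc.mp hk
  have := 𝒱.card_E_add_le hk (by omega)
  omega

lemma condPair_eq_pair (hk : 1 ≤ k) (hkd : k + 1 ≤ d) {P Q : Finset (Fin d)}
    (h : s(P, Q) ∈ 𝒱.E k) {x y : Fin d} (hxP : x ∈ P) (hxQ : x ∉ Q) (hyQ : y ∈ Q) (hyP : y ∉ P) :
    condPair s(P, Q) = {x, y} := by
  have hcard := 𝒱.card_condPair hk hkd h
  rw [condPair_mk] at hcard ⊢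
  exact sdiff_union_sdiff_eq_pair hcard hxP hxQ hyQ hyP

lemma exists_condPair_eq_of_mem_V (hk : 1 ≤ k) (hkd : k ≤ d) {A : Finset (Fin d)}
    (hA : A ∈ 𝒱.V k) {x y : Fin d} (hx : x ∈ A) (hy : y ∈ A) (hxy : x ≠ y) :
    ∃ j, 1 ≤ j ∧ j < k ∧ ∃ f ∈ 𝒱.E j, condPair f = {x, y} := by
  induction k, hk using Nat.le_induction generalizing A with
  | base =>
    rw [𝒱.hV1, mem_image] at hA
    obtain ⟨a, -, rfl⟩ := hA
    exact absurd ((mem_singleton.mp hx).trans (mem_singleton.mp hy).symm) hxy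
  | succ k hk ih =>
    obtain ⟨P, Q, hPQ, rfl⟩ := 𝒱.exists_eq_eUnion_of_mem_V_succ hk hA
    have htree := 𝒱.isTreeOn hk hkd
    have hP := htree.1 _ hPQ P (Sym2.mem_mk_left P Q)
    have hQ := htree.1 _ hPQ Q (Sym2.mem_mk_right P Q)
    have earlier {B : Finset (Fin d)} (hB : B ∈ 𝒱.V k) (hxB : x ∈ B) (hyB : y ∈ B) :
        ∃ j, 1 ≤ j ∧ j < k + 1 ∧ ∃ f ∈ 𝒱.E j, condPair f = {x, y} :=
      (ih (by omega) hB hxB hyB).imp fun _ ⟨hj, hjk, hf⟩ => ⟨hj, by omega, hf⟩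
    rcases mem_union.mp hx with hxP | hxQ <;> rcases mem_union.mp hy with hyP | hyQ
    · exact earlier hP hxP hyP
    · by_cases hxQ : x ∈ Q
      · exact earlier hQ hxQ hyQ
      by_cases hyP : y ∈ P
      · exact earlier hP hxP hyP
      exact ⟨k, hk, by omega, _, hPQ, 𝒱.condPair_eq_pair hk hkd hPQ hxP hxQ hyQ hyP⟩
    · by_cases hyQ : y ∈ Q
      · exact earlier hQ hxQ hyQ
      by_cases hxP : x ∈ P
      · exact earlier hP hxP hyP
      rw [Sym2.eq_swap] at hPQ
      exact ⟨k, hk, by omega, _, hPQ, 𝒱.condPair_eq_pair hk hkd hPQ hxQ hxP hyP hyQ⟩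
    · exact earlier hQ hxQ hyQ

lemma exists_condPair_eq_pair {x y : Fin d} (hxy : x ≠ y) :
    ∃ j, 1 ≤ j ∧ j ≤ d - 1 ∧ ∃ f ∈ 𝒱.E j, condPair f = {x, y} := by
  have hd : 1 ≤ d := Fin.pos x
  obtain ⟨A, hA, -⟩ := 𝒱.exists_mem_V_of_mem hd le_rfl x
  have hAuniv : A = univ :=
    eq_univ_of_card A (by rw [𝒱.card_of_mem_V hd le_rfl hA, Fintype.card_fin])
  obtain ⟨j, hj, hjd, hf⟩ := 𝒱.exists_condPair_eq_of_mem_V hd le_rfl hA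
    (hAuniv ▸ mem_univ x) (hAuniv ▸ mem_univ y) hxy
  exact ⟨j, hj, by omega, hf⟩

end RegularVine

/-- No unordered pair of variables is the conditioned set of two different edges of
a regular vine: distinct edges (possibly in different trees) have distinct
conditioned pairs. -/
theorem vine_condPair_injective {d : ℕ} (𝒱 : RegularVine (Fin d)) :
    ∀ k k' : ℕ, 1 ≤ k → k ≤ d - 1 → 1 ≤ k' → k' ≤ d - 1 →
      ∀ e ∈ 𝒱.E k, ∀ e' ∈ 𝒱.E k', (k, e) ≠ (k', e') →
        condPair e ≠ condPair e' := by
  intro k k' hk hkd hk' hk'd e he e' he' hne hcp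
  let edges := (Icc 1 (d - 1)).sigma 𝒱.E
  have hmaps (p) (hp : p ∈ edges) : condPair p.2 ∈ powersetCard 2 (univ : Finset (Fin d)) := by
    obtain ⟨hj, hf⟩ := mem_sigma.mp hp
    obtain ⟨hj, hjd⟩ := mem_Icc.mp hj
    exact mem_powersetCard.mpr ⟨subset_univ _, 𝒱.card_condPair hj (by omega) hf⟩
  have hsurj (q) (hq : q ∈ powersetCard 2 (univ : Finset (Fin d))) :
      ∃ p, ∃ _ : p ∈ edges, condPair p.2 = q := by
    obtain ⟨x, y, hxy, rfl⟩ := card_eq_two.mp (mem_powersetCard.mp hq).2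
    obtain ⟨j, hj, hjd, f, hf, hfxy⟩ := 𝒱.exists_condPair_eq_pair hxy
    exact ⟨⟨j, f⟩, mem_sigma.mpr ⟨mem_Icc.mpr ⟨hj, hjd⟩, hf⟩, hfxy⟩
  have hcard : #edges ≤ #(powersetCard 2 (univ : Finset (Fin d))) := by
    rw [card_sigma, card_powersetCard, card_univ, Fintype.card_fin]
    exact 𝒱.sum_card_E_le
  have hsame := inj_on_of_surj_on_of_card_le (fun p _ => condPair p.2) hmaps hsurj hcard
    (a₁ := ⟨k, e⟩) (a₂ := ⟨k', e'⟩) (mem_sigma.mpr ⟨mem_Icc.mpr ⟨hk, hkd⟩, he⟩)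
    (mem_sigma.mpr ⟨mem_Icc.mpr ⟨hk', hk'd⟩, he'⟩) hcp
  obtain ⟨rfl, hee'⟩ := Sigma.mk.inj_iff.mp hsame
  exact hne (congrArg _ (eq_of_heq hee'))
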